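/- Let k ≥ 1 and consider the time-homogeneous Markov chain on states {0, 1, …, k} in which state 0 is absorbing and, from each state i with 1 ≤ i ≤ k, the chain moves to state i−1 with probability 1/2 and to state k with probability 1/2. Then for every starting state i with 1 ≤ i ≤ k, the expected hitting time of state 0 satisfies E[T_i] ≥ 2^k. -/

import Mathlib

open MeasureTheory ENNReal Finset

noncomputable section

/-- `μ` is the law of the time-homogeneous Markov chain on the state space `S` with
one-step transition probabilities `p` and initial state `s`, described through the
probabilities of all cylinder events. -/
def IsMarkovChain {S : Type*} [MeasurableSpace S] [DecidableEq S] (p : S → S → ℝ≥0∞) (s : S)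
    (μ : MeasureTheory.Measure (ℕ → S)) : Prop :=
  MeasureTheory.IsProbabilityMeasure μ ∧
    ∀ (T : ℕ) (path : ℕ → S),
      μ {ω | ∀ t ≤ T, ω t = path t} =
        (if path 0 = s then 1 else 0) * ∏ t ∈ Finset.range T, p (path t) (path (t + 1))

/-- The first *positive* hitting time `min {t > 0 : ω t = j}` of the state `j`
along the trajectory `ω`, viewed in `ℝ≥0∞` (it is `∞` if `j` is never hit). -/
def hitTime {S : Type*} (j : S) (ω : ℕ → S) : ℝ≥0∞ :=
  sInf ((fun t : ℕ => (t : ℝ≥0∞)) '' {t | 0 < t ∧ ω t = j})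

/-- The expected hitting time `E[T_{·,j}]` of state `j` under the trajectory law `μ`
(possibly `+∞`). -/
def expHit {S : Type*} [MeasurableSpace S] (μ : MeasureTheory.Measure (ℕ → S)) (j : S) :
    ℝ≥0∞ :=
  ∫⁻ ω, hitTime j ω ∂μ

/-- Transition probabilities of the nearest-neighbour Markov chain on `{a, …, b} ⊆ ℤ`
with reflecting barriers at `a` and `b`: from `a` go to `a+1`, from `b` go to `b-1`,
and from an interior state `i` go to `i+1` with probability `π i` and to `i-1` with
probability `1 - π i`. -/
def nnTrans (a b : ℤ) (π : ℤ → ℝ≥0∞) : ℤ → ℤ → ℝ≥0∞ := fun i j =>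
  if i = a then (if j = a + 1 then 1 else 0)
  else if i = b then (if j = b - 1 then 1 else 0)
  else if a < i ∧ i < b then
    (if j = i + 1 then π i else if j = i - 1 then 1 - π i else 0)
  else 0

/-- Transition probabilities of the Random-Compass chain on `{0, 1, …, k}`: state `0` is
absorbing and, from each state `i` with `1 ≤ i ≤ k`, the chain moves to `i - 1` with
probability `1/2` and to `k` with probability `1/2`. -/
def rcTrans (k : ℕ) : ℕ → ℕ → ℝ≥0∞ := fun i j =>
  if i = 0 then (if j = 0 then 1 else 0)
  else if i ≤ k then (if j = i - 1 then 1 / 2 else 0) + (if j = k then 1 / 2 else 0)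
  else 0

/-- The hitting time `min {t ≥ 0 : ω t = j}` of the state `j` along the trajectory `ω`,
viewed in `ℝ≥0∞` (it is `∞` if `j` is never visited). -/
def hitTimeFrom0 {S : Type*} (j : S) (ω : ℕ → S) : ℝ≥0∞ :=
  sInf ((fun t : ℕ => (t : ℝ≥0∞)) '' {t | ω t = j})

/-!
Writing `T` for the hitting time of `0`, `E[T] ≥ ∑ₜ P(T > t)`, and `P(T > t)` is the survival
probability `u_t(i)` given by the first-step recursion of the chain. The total survival times
`a j = ∑ₜ u_t(j)` satisfy `a 0 = 0` and `a (j + 1) = 1 + a j / 2 + a k / 2`. Unrolling gives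
`2^j a_j + (2 + a_k) = 2^j (2 + a_k)`; at `j = k` this forces `a_k = 2^(k+1) - 2` unless `a_k = ∞`,
and then `a_i ≥ 1 + a_k / 2 = 2^k`.
-/

def avoidUntil {S : Type*} (z : S) (t : ℕ) : Set (ℕ → S) := {ω | ∀ u ≤ t, ω u ≠ z}

lemma measurableSet_avoidUntil {S : Type*} [MeasurableSpace S] [MeasurableSingletonClass S]
    (z : S) (t : ℕ) : MeasurableSet (avoidUntil z t) := by
  unfold avoidUntil
  measurability

lemma tsum_indicator_avoidUntil_le_hitTimeFrom0 {S : Type*} (z : S) (ω : ℕ → S) :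
    ∑' t, (avoidUntil z t).indicator 1 ω ≤ hitTimeFrom0 z ω := by
  refine le_sInf ?_
  rintro _ ⟨u, hu, rfl⟩
  have hvanish : ∀ t ∉ range u, (avoidUntil z t).indicator (1 : (ℕ → S) → ℝ≥0∞) ω = 0 :=
    fun t ht => Set.indicator_of_notMem
      (fun hω : ω ∈ avoidUntil z t => hω u (by simpa using ht) hu) _
  calc ∑' t, (avoidUntil z t).indicator (1 : (ℕ → S) → ℝ≥0∞) ω
      = ∑ t ∈ range u, (avoidUntil z t).indicator 1 ω := tsum_eq_sum hvanish
    _ ≤ ∑ _t ∈ range u, (1 : ℝ≥0∞) := sum_le_sum fun t _ => Set.indicator_le_self' (by simp) ω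
    _ = u := by simp

lemma tsum_measure_avoidUntil_le_lintegral_hitTimeFrom0 {S : Type*} [MeasurableSpace S]
    [MeasurableSingletonClass S] (μ : Measure (ℕ → S)) (z : S) :
    ∑' t, μ (avoidUntil z t) ≤ ∫⁻ ω, hitTimeFrom0 z ω ∂μ := by
  calc ∑' t, μ (avoidUntil z t)
      = ∫⁻ ω, ∑' t, (avoidUntil z t).indicator 1 ω ∂μ := by
        rw [lintegral_tsum fun t =>
          (measurable_one.indicator (measurableSet_avoidUntil z t)).aemeasurable]
        simp_rw [lintegral_indicator_one (measurableSet_avoidUntil z _)]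
    _ ≤ ∫⁻ ω, hitTimeFrom0 z ω ∂μ := lintegral_mono (tsum_indicator_avoidUntil_le_hitTimeFrom0 z)

/-- `survivalProb p z t x` is the probability that the chain started at `x` avoids `z` at all
times `0, …, t`. -/
def survivalProb {S : Type*} [DecidableEq S] (p : S → S → ℝ≥0∞) (z : S) : ℕ → S → ℝ≥0∞
  | 0, x => if x = z then 0 else 1
  | t + 1, x => if x = z then 0 else ∑' y, p x y * survivalProb p z t y

@[simp]
lemma survivalProb_self {S : Type*} [DecidableEq S] (p : S → S → ℝ≥0∞) (z : S) (t : ℕ) :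
    survivalProb p z t z = 0 := by
  cases t <;> simp [survivalProb]

def cylinderAvoid {S : Type*} (path : ℕ → S) (n : ℕ) (z : S) (t : ℕ) : Set (ℕ → S) :=
  {ω | (∀ u ≤ n, ω u = path u) ∧ ∀ u ≤ t, ω (n + u) ≠ z}

section CylinderAvoid

variable {S : Type*} {path : ℕ → S} {n : ℕ} {z : S}

lemma measurableSet_cylinderAvoid [MeasurableSpace S] [MeasurableSingletonClass S]
    (path : ℕ → S) (n : ℕ) (z : S) (t : ℕ) : MeasurableSet (cylinderAvoid path n z t) := by
  unfold cylinderAvoid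
  measurability

lemma cylinderAvoid_eq_empty {t : ℕ} (hz : path n = z) : cylinderAvoid path n z t = ∅ :=
  Set.eq_empty_of_forall_notMem fun ω hω =>
    hω.2 0 (Nat.zero_le _) (by rw [add_zero, hω.1 n le_rfl, hz])

lemma cylinderAvoid_zero (hz : path n ≠ z) :
    cylinderAvoid path n z 0 = {ω | ∀ u ≤ n, ω u = path u} := by
  ext ω
  refine ⟨And.left, fun hω => ⟨hω, fun u hu => ?_⟩⟩
  rwa [Nat.le_zero.1 hu, add_zero, hω n le_rfl]

lemma cylinderAvoid_succ {t : ℕ} (hz : path n ≠ z) :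
    cylinderAvoid path n z (t + 1) =
      ⋃ y, cylinderAvoid (Function.update path (n + 1) y) (n + 1) z t := by
  ext ω
  simp only [cylinderAvoid, Set.mem_ofPred_eq, Set.mem_iUnion]
  constructor
  · rintro ⟨hcyl, havoid⟩
    refine ⟨ω (n + 1), fun u hu => ?_, fun u hu => ?_⟩
    · rcases Nat.le_succ_iff.1 hu with hu | rfl
      · rw [Function.update_of_ne (by omega), hcyl u hu]
      · rw [Function.update_self]
    · have := havoid (u + 1) (by omega)
      rwa [show n + (u + 1) = n + 1 + u by omega] at this
  · rintro ⟨y, hcyl, havoid⟩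
    refine ⟨fun u hu => ?_, fun u hu => ?_⟩
    · rw [hcyl u (by omega), Function.update_of_ne (by omega)]
    · rcases u with _ | u
      · rwa [add_zero, hcyl n (by omega), Function.update_of_ne (by omega)]
      · have := havoid u (by omega)
        rwa [show n + 1 + u = n + (u + 1) by omega] at this

lemma pairwise_disjoint_cylinderAvoid_update {t : ℕ} :
    Pairwise (Function.onFun Disjoint fun y =>
      cylinderAvoid (Function.update path (n + 1) y) (n + 1) z t) := by
  intro y y' hne
  refine Set.disjoint_left.2 fun ω hω hω' => hne ?_
  have hy := hω.1 (n + 1) le_rfl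
  have hy' := hω'.1 (n + 1) le_rfl
  rw [Function.update_self] at hy hy'
  exact hy.symm.trans hy'

end CylinderAvoid

namespace IsMarkovChain

variable {S : Type*} [MeasurableSpace S] [DecidableEq S] {p : S → S → ℝ≥0∞} {s : S}
  {μ : Measure (ℕ → S)}

lemma measure_cylinder_succ (h : IsMarkovChain p s μ) (n : ℕ) (path : ℕ → S) (y : S) :
    μ {ω | ∀ u ≤ n + 1, ω u = Function.update path (n + 1) y u} =
      μ {ω | ∀ u ≤ n, ω u = path u} * p (path n) y := by
  have hlow : ∀ u ≤ n, Function.update path (n + 1) y u = path u := fun u hu =>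
    Function.update_of_ne (by omega) _ _
  rw [h.2, h.2, prod_range_succ, hlow 0 (Nat.zero_le _), hlow n le_rfl,
    Function.update_self, mul_assoc]
  congr 2
  exact prod_congr rfl fun u hu => by
    rw [hlow u (by simp at hu; omega), hlow (u + 1) (by simp at hu; omega)]

lemma measure_cylinderAvoid [Countable S] [MeasurableSingletonClass S]
    (h : IsMarkovChain p s μ) (z : S) (t : ℕ) :
    ∀ (n : ℕ) (path : ℕ → S),
      μ (cylinderAvoid path n z t) =
        μ {ω | ∀ u ≤ n, ω u = path u} * survivalProb p z t (path n) := by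
  induction t with
  | zero =>
    intro n path
    by_cases hz : path n = z
    · rw [cylinderAvoid_eq_empty hz, hz, survivalProb_self, measure_empty, mul_zero]
    rw [cylinderAvoid_zero hz, survivalProb, if_neg hz, mul_one]
  | succ t ih =>
    intro n path
    by_cases hz : path n = z
    · rw [cylinderAvoid_eq_empty hz, hz, survivalProb_self, measure_empty, mul_zero]
    rw [cylinderAvoid_succ hz, measure_iUnion pairwise_disjoint_cylinderAvoid_update
      fun y => measurableSet_cylinderAvoid _ _ _ _]
    simp_rw [ih (n + 1), Function.update_self, h.measure_cylinder_succ, mul_assoc,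
      ENNReal.tsum_mul_left, survivalProb, if_neg hz]

lemma survivalProb_le_measure_avoidUntil [Countable S] [MeasurableSingletonClass S]
    (h : IsMarkovChain p s μ) (z : S) (t : ℕ) :
    survivalProb p z t s ≤ μ (avoidUntil z t) := by
  have := h.measure_cylinderAvoid z t 0 fun _ => s
  rw [h.2] at this
  simp only [range_zero, prod_empty, mul_one, if_true, one_mul] at this
  rw [← this]
  exact measure_mono fun ω hω u hu => by simpa using hω.2 u hu

end IsMarkovChain

lemma two_pow_le_of_recurrence {k i : ℕ} (a : ℕ → ℝ≥0∞) (h0 : a 0 = 0)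
    (hrec : ∀ j < k, a (j + 1) = 1 + 2⁻¹ * a j + 2⁻¹ * a k) (hi : 1 ≤ i) (hik : i ≤ k) :
    2 ^ k ≤ a i := by
  have two_mul_inv : (2 : ℝ≥0∞) * 2⁻¹ = 1 := ENNReal.mul_inv_cancel two_ne_zero ofNat_ne_top
  have hunroll : ∀ j ≤ k, 2 ^ j * a j + (2 + a k) = (2 + a k) * 2 ^ j := by
    intro j hj
    induction j with
    | zero => simp [h0]
    | succ j ih =>
      calc 2 ^ (j + 1) * a (j + 1) + (2 + a k)
          = 2 ^ j * 2 + 2 ^ j * (2 * 2⁻¹) * a k + 2 ^ j * (2 * 2⁻¹) * a j + (2 + a k) := by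
            rw [hrec j (by omega)]; ring
        _ = 2 ^ j * 2 + 2 ^ j * a k + (2 ^ j * a j + (2 + a k)) := by rw [two_mul_inv]; ring
        _ = (2 + a k) * 2 ^ (j + 1) := by rw [ih (by omega)]; ring
  obtain ⟨j, rfl⟩ : ∃ j, i = j + 1 := ⟨i - 1, by omega⟩
  have hlow : 2⁻¹ * (2 + a k) ≤ a (j + 1) := by
    rw [hrec j (by omega), mul_add, ENNReal.inv_mul_cancel two_ne_zero ofNat_ne_top]
    gcongr
    exact le_self_add
  by_cases htop : a k = ⊤
  · have : a (j + 1) = ⊤ := by simpa [htop] using hlow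
    simp [this]
  have hak : 2 + a k = 2 * 2 ^ k := by
    have := hunroll k le_rfl
    rwa [add_mul, mul_comm (a k), add_comm (2 * 2 ^ k),
      ENNReal.add_right_inj (ENNReal.mul_ne_top (by simp) htop)] at this
  rwa [hak, ← mul_assoc, mul_comm 2⁻¹, two_mul_inv, one_mul] at hlow

lemma survivalProb_rcTrans_succ_succ {k j : ℕ} (hj : j < k) (t : ℕ) :
    survivalProb (rcTrans k) 0 (t + 1) (j + 1) =
      2⁻¹ * survivalProb (rcTrans k) 0 t j + 2⁻¹ * survivalProb (rcTrans k) 0 t k := by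
  simp only [survivalProb, rcTrans, Nat.add_one_ne_zero, if_false, if_pos (show j + 1 ≤ k by omega),
    Nat.add_sub_cancel, add_mul, ite_mul, zero_mul, ENNReal.tsum_add, tsum_ite_eq, one_div]

lemma tsum_survivalProb_rcTrans_succ {k j : ℕ} (hj : j < k) :
    ∑' t, survivalProb (rcTrans k) 0 t (j + 1) =
      1 + 2⁻¹ * ∑' t, survivalProb (rcTrans k) 0 t j +
        2⁻¹ * ∑' t, survivalProb (rcTrans k) 0 t k := by
  rw [tsum_eq_zero_add' ENNReal.summable]
  simp_rw [survivalProb_rcTrans_succ_succ hj]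
  rw [ENNReal.tsum_add, ENNReal.tsum_mul_left, ENNReal.tsum_mul_left, add_assoc]
  simp [survivalProb]

theorem statement12_general (k : ℕ) (i : ℕ) (hi : 1 ≤ i) (hik : i ≤ k)
    (μ : MeasureTheory.Measure (ℕ → ℕ))
    (h : IsMarkovChain (rcTrans k) i μ) :
    2 ^ k ≤ ∫⁻ ω, hitTimeFrom0 0 ω ∂μ :=
  calc 2 ^ k ≤ ∑' t, survivalProb (rcTrans k) 0 t i :=
        two_pow_le_of_recurrence (fun j => ∑' t, survivalProb (rcTrans k) 0 t j) (by simp)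
          (fun _ hj => tsum_survivalProb_rcTrans_succ hj) hi hik
    _ ≤ ∑' t, μ (avoidUntil 0 t) :=
        ENNReal.tsum_le_tsum fun t => h.survivalProb_le_measure_avoidUntil 0 t
    _ ≤ ∫⁻ ω, hitTimeFrom0 0 ω ∂μ := tsum_measure_avoidUntil_le_lintegral_hitTimeFrom0 μ 0

/-- For `k ≥ 1` and every starting state `i` with `1 ≤ i ≤ k`,
the expected hitting time of the absorbing state `0` in the Random-Compass chain on
`{0, 1, …, k}` is at least `2^k`. -/
theorem statement12 (k : ℕ) (hk : 1 ≤ k) (i : ℕ) (hi : 1 ≤ i) (hik : i ≤ k)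
    (μ : MeasureTheory.Measure (ℕ → ℕ))
    (h : IsMarkovChain (rcTrans k) i μ) :
    2 ^ k ≤ ∫⁻ ω, hitTimeFrom0 0 ω ∂μ :=
  statement12_general k i hi hik μ h
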